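/- The subspace spanned by S2, S1, T, L2, L1 in the 7-dimensional Lie algebra with brackets [T,L2]=4S2, [T,L1]=4S1, [L2,L1]=−4T (other brackets among these five being zero) is a Lie subalgebra isomorphic to the Lie algebra n_5^4, which has basis x1,...,x5 with nonzero brackets [x1,x2]=x3, [x1,x3]=x4, [x2,x3]=x5. -/

import Mathlib

/-! The span of `S2, S1, T, L2, L1` contains every vector with vanishing `D`- and
`R`-coordinates, in particular every bracket `br7 u v`. The map `x1 ↦ L2`, `x2 ↦ L1`,
`x3 ↦ -4T`, `x4 ↦ 16 S2`, `x5 ↦ 16 S1` respects brackets and is injective; its image lies in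
this span of dimension at most five, so by counting dimensions it is the whole span. -/

/-- The bracket of the 5-dimensional real Lie algebra `n_5^4`:
`[x1,x2]=x3`, `[x1,x3]=x4`, `[x2,x3]=x5` (indices `0,…,4`). -/
def brN (x y : Fin 5 → ℝ) : Fin 5 → ℝ :=
  ![0, 0, x 0 * y 1 - x 1 * y 0, x 0 * y 2 - x 2 * y 0, x 1 * y 2 - x 2 * y 1]

/-- The bracket of the abstract 7-dimensional Lie algebra with basis
`S2, S1, T, L2, L1, D, R` (indices `0,…,6`) and nonzero brackets (among the
first five) `[T,L2]=4S2`, `[T,L1]=4S1`, `[L2,L1]=−4T`. -/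
def br7 (x y : Fin 7 → ℝ) : Fin 7 → ℝ :=
  ![4 * (x 2 * y 3 - x 3 * y 2), 4 * (x 2 * y 4 - x 4 * y 2),
    -4 * (x 3 * y 4 - x 4 * y 3), 0, 0, 0, 0]

open Module

theorem Pi.mem_span_image_single_one {ι R : Type*} [Fintype ι] [DecidableEq ι]
    [Semiring R] {s : Set ι} {w : ι → R} (hw : ∀ i ∉ s, w i = 0) :
    w ∈ Submodule.span R ((fun i => Pi.single i (1 : R)) '' s) := by
  rw [pi_eq_sum_univ' w]
  refine Submodule.sum_mem _ fun i _ => ?_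
  by_cases hi : i ∈ s
  · exact Submodule.smul_mem _ _ (Submodule.subset_span ⟨i, hi, rfl⟩)
  · simp [hw i hi]

theorem mem_span_single_one_of_apply_five_six {w : Fin 7 → ℝ} (h5 : w 5 = 0) (h6 : w 6 = 0) :
    w ∈ Submodule.span ℝ ({Pi.single 0 1, Pi.single 1 1, Pi.single 2 1,
      Pi.single 3 1, Pi.single 4 1} : Set (Fin 7 → ℝ)) := by
  have hset : ({Pi.single 0 1, Pi.single 1 1, Pi.single 2 1, Pi.single 3 1, Pi.single 4 1} :
      Set (Fin 7 → ℝ)) = (fun i => Pi.single i 1) '' {0, 1, 2, 3, 4} := by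
    simp only [Set.image_insert_eq, Set.image_singleton]
  rw [hset]
  refine Pi.mem_span_image_single_one fun i hi => ?_
  fin_cases i <;> simp_all

theorem finrank_span_single_one_le_five :
    finrank ℝ (Submodule.span ℝ ({Pi.single 0 1, Pi.single 1 1, Pi.single 2 1,
      Pi.single 3 1, Pi.single 4 1} : Set (Fin 7 → ℝ))) ≤ 5 := by
  have h := finrank_span_finset_le_card (R := ℝ)
    ({Pi.single 0 1, Pi.single 1 1, Pi.single 2 1, Pi.single 3 1, Pi.single 4 1} :
      Finset (Fin 7 → ℝ))
  push_cast at h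
  exact h.trans Finset.card_le_five

def n54Embedding : (Fin 5 → ℝ) →ₗ[ℝ] (Fin 7 → ℝ) where
  toFun x := ![16 * x 3, 16 * x 4, -4 * x 2, x 0, x 1, 0, 0]
  map_add' x y := by ext i; fin_cases i <;> simp [mul_add]
  map_smul' c x := by ext i; fin_cases i <;> simp <;> ring

theorem n54Embedding_injective : Function.Injective n54Embedding := by
  have hinv : Function.LeftInverse
      (fun w : Fin 7 → ℝ => ![w 3, w 4, -w 2 / 4, w 0 / 16, w 1 / 16]) n54Embedding := by
    intro x
    ext i
    fin_cases i <;> simp [n54Embedding]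
  exact hinv.injective

theorem n54Embedding_brN (x y : Fin 5 → ℝ) :
    n54Embedding (brN x y) = br7 (n54Embedding x) (n54Embedding y) := by
  ext i
  fin_cases i <;> simp [n54Embedding, brN, br7] <;> ring

theorem range_n54Embedding :
    LinearMap.range n54Embedding = Submodule.span ℝ ({Pi.single 0 1, Pi.single 1 1,
      Pi.single 2 1, Pi.single 3 1, Pi.single 4 1} : Set (Fin 7 → ℝ)) := by
  refine Submodule.eq_of_le_of_finrank_le ?_ ?_
  · rintro _ ⟨x, rfl⟩
    exact mem_span_single_one_of_apply_five_six rfl rfl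
  · rw [LinearMap.finrank_range_of_inj n54Embedding_injective, finrank_fin_fun]
    exact finrank_span_single_one_le_five

/-- The subspace spanned by `S2, S1, T, L2, L1` is a Lie subalgebra, and it is
isomorphic to `n_5^4`: there is an injective linear map of `n_5^4` into the
7-dimensional algebra, respecting brackets, whose range is this subspace. -/
theorem span5_subalgebra_iso_n54 :
    (∀ u v : Fin 7 → ℝ,
      u ∈ Submodule.span ℝ ({Pi.single 0 1, Pi.single 1 1, Pi.single 2 1,
        Pi.single 3 1, Pi.single 4 1} : Set (Fin 7 → ℝ)) →
      v ∈ Submodule.span ℝ ({Pi.single 0 1, Pi.single 1 1, Pi.single 2 1,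
        Pi.single 3 1, Pi.single 4 1} : Set (Fin 7 → ℝ)) →
      br7 u v ∈ Submodule.span ℝ ({Pi.single 0 1, Pi.single 1 1, Pi.single 2 1,
        Pi.single 3 1, Pi.single 4 1} : Set (Fin 7 → ℝ))) ∧
    (∃ f : (Fin 5 → ℝ) →ₗ[ℝ] (Fin 7 → ℝ),
      Function.Injective f ∧
      LinearMap.range f =
        Submodule.span ℝ ({Pi.single 0 1, Pi.single 1 1, Pi.single 2 1,
          Pi.single 3 1, Pi.single 4 1} : Set (Fin 7 → ℝ)) ∧
      ∀ x y : Fin 5 → ℝ, f (brN x y) = br7 (f x) (f y)) :=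
  ⟨fun _ _ _ _ => mem_span_single_one_of_apply_five_six rfl rfl,
    n54Embedding, n54Embedding_injective, range_n54Embedding, n54Embedding_brN⟩
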